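/- Let ⟨C_{α,i} : α ∈ acc(μ⁺), i(α) ≤ i < cf(μ)⟩ be a □^{ind}_{μ,cf(μ)}-sequence, and define c on pairs of limit ordinals below μ⁺ by letting c(α, β) be the least i with i(β) ≤ i and α ∈ acc(C_{β,i}). If i < cf(μ), Λ ⊆ i, and X ⊆ acc(μ⁺) is well-connected in Λ, then for all α < β in X, α ∈ acc(C_{β,i}). -/

import Mathlib

open Cardinal Set

noncomputable section

/-- The color of the unordered pair `{a,b}` under `c`. -/
def pairColor (c : Ordinal → Ordinal → Ordinal) (a b : Ordinal) : Ordinal :=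
  c (min a b) (max a b)

/-- `X` is well-connected in the set of colors `Λ` with respect to `c`, with the
connecting paths allowed to use any vertices from `Dom`. -/
def WellConnectedIn (Dom : Set Ordinal) (c : Ordinal → Ordinal → Ordinal)
    (Λ : Set Ordinal) (X : Set Ordinal) : Prop :=
  ∀ α ∈ X, ∀ β ∈ X, α < β →
    ∃ (n : ℕ) (f : ℕ → Ordinal), f 0 = α ∧ f n = β ∧
      (∀ k ≤ n, α ≤ f k ∧ f k ∈ Dom) ∧
      (∀ k < n, f k ≠ f (k + 1) ∧ pairColor c (f k) (f (k + 1)) ∈ Λ)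

/-- The set of accumulation points of a set of ordinals. -/
def accPts (C : Set Ordinal) : Set Ordinal :=
  {β | (C ∩ Set.Iio β).Nonempty ∧ sSup (C ∩ Set.Iio β) = β}

/-- `C` is club in `α`. -/
def IsClubIn (C : Set Ordinal) (α : Ordinal) : Prop :=
  C ⊆ Set.Iio α ∧ (∀ β < α, ∃ γ ∈ C, β ≤ γ) ∧ accPts C ∩ Set.Iio α ⊆ C

/-- A `□^{ind}_{μ, cf(μ)}`-sequence `⟨C α i : α ∈ acc(μ⁺), i(α) ≤ i < cf(μ)⟩`,
together with the witnessing sequence `⟨μseq i : i < cf(μ)⟩` of regular cardinals. -/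
def IsIndexedSquareSeqSucc (μ : Cardinal.{0}) (iidx : Ordinal → Ordinal)
    (C : Ordinal → Ordinal → Set Ordinal) (μseq : Ordinal → Cardinal.{0}) : Prop :=
  letI ν := (Order.succ μ).ord
  letI cf := (μ.ord.cof).ord
  -- (1) indices below cf(μ)
  (∀ α, α < ν → Order.IsSuccLimit α → iidx α < cf) ∧
  -- (2) clubs
  (∀ α, α < ν → Order.IsSuccLimit α → ∀ i, iidx α ≤ i → i < cf → IsClubIn (C α i) α) ∧
  -- (3) monotonicity
  (∀ α, α < ν → Order.IsSuccLimit α → ∀ i j, iidx α ≤ i → i ≤ j → j < cf →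
    C α i ⊆ C α j) ∧
  -- (4) coherence
  (∀ α β, α < β → β < ν → Order.IsSuccLimit α → Order.IsSuccLimit β →
    ∀ i, iidx β ≤ i → i < cf → α ∈ accPts (C β i) →
      iidx α ≤ i ∧ C α i = C β i ∩ Set.Iio α) ∧
  -- (5) every pair is connected at some index
  (∀ α β, α < β → β < ν → Order.IsSuccLimit α → Order.IsSuccLimit β →
    ∃ i, iidx β ≤ i ∧ i < cf ∧ α ∈ accPts (C β i)) ∧
  -- (6) the cardinals μseq i are regular, increasing and cofinal in μ,
  --     and bound the sizes of the clubs
  (∀ i, i < cf → (μseq i).IsRegular) ∧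
  (∀ i j, i ≤ j → j < cf → μseq i ≤ μseq j) ∧
  (∀ χ, χ < μ → ∃ i, i < cf ∧ χ ≤ μseq i) ∧
  (∀ α, α < ν → Order.IsSuccLimit α → ∀ i, iidx α ≤ i → i < cf →
    #(C α i) < Cardinal.lift.{1} (μseq i))

/-- `c (α, β)` is the least `i` with `i(β) ≤ i` and `α ∈ acc(C β i)`. -/
def IsLeastIndexColoring (μ : Cardinal.{0}) (iidx : Ordinal → Ordinal)
    (C : Ordinal → Ordinal → Set Ordinal) (c : Ordinal → Ordinal → Ordinal) : Prop :=
  ∀ α β, α < β → β < (Order.succ μ).ord → Order.IsSuccLimit α → Order.IsSuccLimit β →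
    (iidx β ≤ c α β ∧ α ∈ accPts (C β (c α β)) ∧
      ∀ j, iidx β ≤ j → α ∈ accPts (C β j) → c α β ≤ j)

/-!
If `γ < δ` and `c γ δ ≤ i`, then `γ ∈ acc (C δ i)` by monotonicity in the index, so coherence
gives `C γ i = C δ i ∩ γ`; hence for `α < γ`, `α ∈ acc (C γ i) ↔ α ∈ acc (C δ i)`. Every edge of
a connecting path has color in `Λ ⊆ i` and lies above `α`, so `α ∈ acc (C · i)` travels along
the path from its first edge (where it is `c α δ ≤ i`) to `β`.
-/

theorem accPts_mono {S T : Set Ordinal} (h : S ⊆ T) : accPts S ⊆ accPts T := by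
  rintro β ⟨hne, hsup⟩
  have hST : S ∩ Iio β ⊆ T ∩ Iio β := inter_subset_inter_left _ h
  refine ⟨hne.mono hST, le_antisymm (csSup_le (hne.mono hST) fun γ hγ => hγ.2.le) ?_⟩
  exact hsup.symm.le.trans (csSup_le_csSup (bddAbove_Iio.mono inter_subset_right) hne hST)

theorem mem_accPts_inter_Iio_iff {S : Set Ordinal} {α δ : Ordinal} (h : α ≤ δ) :
    α ∈ accPts (S ∩ Iio δ) ↔ α ∈ accPts S := by
  simp only [accPts, mem_ofPred, inter_assoc, Iio_inter_Iio, min_eq_right h]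

theorem pairColor_of_lt (c : Ordinal → Ordinal → Ordinal) {a b : Ordinal} (h : a < b) :
    pairColor c a b = c a b := by
  rw [pairColor, min_eq_left h.le, max_eq_right h.le]

theorem pairColor_comm (c : Ordinal → Ordinal → Ordinal) (a b : Ordinal) :
    pairColor c a b = pairColor c b a := by
  rw [pairColor, pairColor, min_comm, max_comm]

namespace IsIndexedSquareSeqSucc

variable {μ : Cardinal.{0}} {iidx : Ordinal → Ordinal} {C : Ordinal → Ordinal → Set Ordinal}
  {μseq : Ordinal → Cardinal.{0}} {c : Ordinal → Ordinal → Ordinal} {i α γ δ : Ordinal}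

theorem mem_accPts_of_color_le (hseq : IsIndexedSquareSeqSucc μ iidx C μseq)
    (hc : IsLeastIndexColoring μ iidx C c) (hi : i < μ.ord.cof.ord) (hγδ : γ < δ)
    (hδ : δ < (Order.succ μ).ord) (hγl : Order.IsSuccLimit γ) (hδl : Order.IsSuccLimit δ)
    (hci : c γ δ ≤ i) : γ ∈ accPts (C δ i) :=
  have ⟨hidx, hacc, _⟩ := hc γ δ hγδ hδ hγl hδl
  accPts_mono (hseq.2.2.1 δ hδ hδl _ i hidx hci hi) hacc

theorem mem_accPts_iff_of_color_le (hseq : IsIndexedSquareSeqSucc μ iidx C μseq)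
    (hc : IsLeastIndexColoring μ iidx C c) (hi : i < μ.ord.cof.ord) (hαγ : α ≤ γ)
    (hγδ : γ < δ) (hδ : δ < (Order.succ μ).ord) (hγl : Order.IsSuccLimit γ)
    (hδl : Order.IsSuccLimit δ) (hci : c γ δ ≤ i) :
    α ∈ accPts (C γ i) ↔ α ∈ accPts (C δ i) := by
  have hidx : iidx δ ≤ i := (hc γ δ hγδ hδ hγl hδl).1.trans hci
  rw [(hseq.2.2.2.1 γ δ hγδ hδ hγl hδl i hidx hi
    (hseq.mem_accPts_of_color_le hc hi hγδ hδ hγl hδl hci)).2]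
  exact mem_accPts_inter_Iio_iff hαγ

theorem eq_or_mem_accPts_of_edge (hseq : IsIndexedSquareSeqSucc μ iidx C μseq)
    (hc : IsLeastIndexColoring μ iidx C c) (hi : i < μ.ord.cof.ord)
    (hαl : Order.IsSuccLimit α) (hαγ : α ≤ γ) (hαδ : α ≤ δ)
    (hγ : γ < (Order.succ μ).ord) (hδ : δ < (Order.succ μ).ord)
    (hγl : Order.IsSuccLimit γ) (hδl : Order.IsSuccLimit δ)
    (hne : γ ≠ δ) (hcol : pairColor c γ δ < i) (hγacc : γ = α ∨ α ∈ accPts (C γ i)) :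
    δ = α ∨ α ∈ accPts (C δ i) := by
  rcases hαδ.eq_or_lt with rfl | hαδ
  · exact .inl rfl
  right
  rcases hγacc with rfl | hγacc
  · rw [pairColor_of_lt c hαδ] at hcol
    exact hseq.mem_accPts_of_color_le hc hi hαδ hδ hαl hδl hcol.le
  rcases hne.lt_or_gt with hγδ | hδγ
  · rw [pairColor_of_lt c hγδ] at hcol
    exact (hseq.mem_accPts_iff_of_color_le hc hi hαγ hγδ hδ hγl hδl hcol.le).1 hγacc
  · rw [pairColor_comm, pairColor_of_lt c hδγ] at hcol
    exact (hseq.mem_accPts_iff_of_color_le hc hi hαδ.le hδγ hγ hδl hγl hcol.le).2 hγacc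

end IsIndexedSquareSeqSucc

theorem stmt12_general (μ : Cardinal.{0})
    (iidx : Ordinal → Ordinal) (C : Ordinal → Ordinal → Set Ordinal)
    (μseq : Ordinal → Cardinal.{0})
    (hseq : IsIndexedSquareSeqSucc μ iidx C μseq)
    (c : Ordinal → Ordinal → Ordinal) (hc : IsLeastIndexColoring μ iidx C c)
    (i : Ordinal) (hi : i < (μ.ord.cof).ord) (Λ : Set Ordinal) (hΛ : Λ ⊆ Set.Iio i)
    (X : Set Ordinal) (hX : X ⊆ {α | α < (Order.succ μ).ord ∧ Order.IsSuccLimit α})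
    (hwc : WellConnectedIn {α | α < (Order.succ μ).ord ∧ Order.IsSuccLimit α} c Λ X) :
    ∀ α ∈ X, ∀ β ∈ X, α < β → α ∈ accPts (C β i) := by
  intro α hαX β hβX hαβ
  obtain ⟨n, f, hf0, hfn, hdom, hedge⟩ := hwc α hαX β hβX hαβ
  have hpath : ∀ k ≤ n, f k = α ∨ α ∈ accPts (C (f k) i) := by
    intro k hk
    induction k with
    | zero => exact .inl hf0
    | succ k ih =>
      obtain ⟨hαγ, hγ, hγl⟩ := hdom k (by omega)
      obtain ⟨hαδ, hδ, hδl⟩ := hdom (k + 1) hk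
      obtain ⟨hne, hcol⟩ := hedge k hk
      exact hseq.eq_or_mem_accPts_of_edge hc hi (hX hαX).2 hαγ hαδ hγ hδ hγl hδl hne
        (hΛ hcol) (ih (by omega))
  rw [← hfn]
  exact (hpath n le_rfl).resolve_left (hfn ▸ hαβ.ne')

/-- If `X ⊆ acc(μ⁺)` is well-connected in a set of colors `Λ ⊆ i`, with respect to
the coloring derived from a `□^{ind}_{μ,cf(μ)}`-sequence, then `α ∈ acc(C β i)`
for all `α < β` in `X`. -/
theorem stmt12 (μ : Cardinal.{0}) (hμinf : ℵ₀ ≤ μ) (hsing : ¬ μ.IsRegular)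
    (iidx : Ordinal → Ordinal) (C : Ordinal → Ordinal → Set Ordinal)
    (μseq : Ordinal → Cardinal.{0})
    (hseq : IsIndexedSquareSeqSucc μ iidx C μseq)
    (c : Ordinal → Ordinal → Ordinal) (hc : IsLeastIndexColoring μ iidx C c)
    (i : Ordinal) (hi : i < (μ.ord.cof).ord) (Λ : Set Ordinal) (hΛ : Λ ⊆ Set.Iio i)
    (X : Set Ordinal) (hX : X ⊆ {α | α < (Order.succ μ).ord ∧ Order.IsSuccLimit α})
    (hwc : WellConnectedIn {α | α < (Order.succ μ).ord ∧ Order.IsSuccLimit α} c Λ X) :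
    ∀ α ∈ X, ∀ β ∈ X, α < β → α ∈ accPts (C β i) :=
  stmt12_general μ iidx C μseq hseq c hc i hi Λ hΛ X hX hwc

end
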